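/- arXiv:2310.16502 — 2 statements merged into one kernel-verified Lean document; each statement's English description precedes it below -/
import Mathlib

section
/- Assume the intersection property holds for conditional independence statements of E against partitions of the coordinates of X = (X_1,...,X_p): for any partition A, B, C of {1,...,p}, if E ⊥ X_A | (X_B, X_C) and E ⊥ X_B | (X_A, X_C) then E ⊥ (X_A, X_B) | X_C. Define W as a maximizer over subsets U of {1,...,p} of |U| subject to E ⊥ X_U | X_{-U}, and define W̃ = { j : E ⊥ X_j | X_{-j} }. Then W ⊆ W̃, and under the intersection property W = W̃. -/
open MeasureTheory ProbabilityTheory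

/-- `CI μ E X hX A B` means that `E` is conditionally independent of the subvector `X_A`
given the subvector `X_B`. -/
def CI {Ω : Type*} {mΩ : MeasurableSpace Ω} [StandardBorelSpace Ω]
    (μ : Measure Ω) [IsFiniteMeasure μ] {p : ℕ}
    (E : Ω → ℝ) (X : Fin p → Ω → ℝ) (hX : ∀ i, Measurable (X i))
    (A B : Finset (Fin p)) : Prop :=
  CondIndepFun (MeasurableSpace.comap (fun ω (j : B) => X j ω) inferInstance)
    (Measurable.comap_le (measurable_pi_lambda _ fun j => hX j))
    E (fun ω (j : A) => X j ω) μ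

/-!
Weak union turns `E ⊥ X_W | X_{-W}` into `E ⊥ X_j | X_{-j}` for every `j ∈ W`, so `W ⊆ W̃`.
Conversely, the intersection property adds the coordinates of `W̃` to `W` one at a time while
preserving `E ⊥ X_U | X_{-U}`; hence `W̃` is admissible, and maximality of `|W|` forces `W = W̃`.

Conditional independence is handled through conditional expectations: `m₁ ⊥ m₂ | m'` holds iff
`μ⟦s | m' ⊔ m₂⟧ = μ⟦s | m'⟧` a.e. for every `m₁`-measurable `s`.
-/

theorem isPiSystem_image2_inter {Ω : Type*} (m₁ m₂ : MeasurableSpace Ω) :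
    IsPiSystem (Set.image2 (· ∩ ·) {s | MeasurableSet[m₁] s} {t | MeasurableSet[m₂] t}) := by
  rintro _ ⟨a, ha, b, hb, rfl⟩ _ ⟨a', ha', b', hb', rfl⟩ _
  exact ⟨a ∩ a', ha.inter ha', b ∩ b', hb.inter hb', Set.inter_inter_inter_comm a a' b b'⟩

theorem sup_eq_generateFrom_image2_inter {Ω : Type*} (m₁ m₂ : MeasurableSpace Ω) :
    m₁ ⊔ m₂ = MeasurableSpace.generateFrom
      (Set.image2 (· ∩ ·) {s | MeasurableSet[m₁] s} {t | MeasurableSet[m₂] t}) := by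
  refine le_antisymm (sup_le (fun a ha => ?_) (fun b hb => ?_))
    (MeasurableSpace.generateFrom_le ?_)
  · exact MeasurableSpace.measurableSet_generateFrom
      ⟨a, ha, Set.univ, MeasurableSet.univ, Set.inter_univ a⟩
  · exact MeasurableSpace.measurableSet_generateFrom
      ⟨Set.univ, MeasurableSet.univ, b, hb, Set.univ_inter b⟩
  · rintro _ ⟨a, ha, b, hb, rfl⟩
    exact (le_sup_left (a := m₁) a ha).inter (le_sup_right (a := m₁) b hb)

namespace MeasureTheory

section

variable {Ω E : Type*} [NormedAddCommGroup E] [NormedSpace ℝ E]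
  {m mΩ : MeasurableSpace Ω} {μ : Measure Ω} {f g : Ω → E}

theorem setIntegral_eq_of_isPiSystem {π : Set (Set Ω)} (hm : m ≤ mΩ)
    (hgen : m = MeasurableSpace.generateFrom π) (hπ : IsPiSystem π)
    (hf : Integrable f μ) (hg : Integrable g μ) (huniv : ∫ x, f x ∂μ = ∫ x, g x ∂μ)
    (hbasic : ∀ s ∈ π, ∫ x in s, f x ∂μ = ∫ x in s, g x ∂μ) {s : Set Ω}
    (hs : MeasurableSet[m] s) : ∫ x in s, f x ∂μ = ∫ x in s, g x ∂μ := by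
  induction s, hs using MeasurableSpace.induction_on_inter hgen hπ with
  | empty => simp
  | basic s hs => exact hbasic s hs
  | compl s hs ih =>
    rw [setIntegral_compl (hm s hs) hf, setIntegral_compl (hm s hs) hg, huniv, ih]
  | iUnion s hdisj hs ih =>
    rw [integral_iUnion (fun i => hm _ (hs i)) hdisj hf.integrableOn,
      integral_iUnion (fun i => hm _ (hs i)) hdisj hg.integrableOn]
    exact tsum_congr ih

end

section

variable {Ω E : Type*} [NormedAddCommGroup E] [NormedSpace ℝ E] [CompleteSpace E]
  {m n N mΩ : MeasurableSpace Ω} {μ : Measure Ω} [IsFiniteMeasure μ]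

theorem condExp_ae_eq_of_le_of_condExp_ae_eq {f : Ω → E} (hmn : m ≤ n) (hnN : n ≤ N)
    (hN : N ≤ mΩ) (h : μ[f | N] =ᵐ[μ] μ[f | m]) : μ[f | n] =ᵐ[μ] μ[f | m] :=
  calc μ[f | n] =ᵐ[μ] μ[μ[f | N] | n] := (condExp_condExp_of_le hnN hN).symm
    _ =ᵐ[μ] μ[μ[f | m] | n] := condExp_congr_ae h
    _ = μ[f | m] := condExp_of_stronglyMeasurable (hnN.trans hN)
        (stronglyMeasurable_condExp.mono hmn) integrable_condExp

theorem condExp_indicator_ae_eq_mul_condExp {g : Ω → ℝ} (hg : StronglyMeasurable[m] g)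
    (hgi : Integrable g μ) {t : Set Ω} (ht : MeasurableSet t) :
    μ[t.indicator g | m] =ᵐ[μ] g * μ⟦t | m⟧ := by
  have hmul : t.indicator g = g * t.indicator fun _ => (1 : ℝ) := by
    funext ω; by_cases hω : ω ∈ t <;> simp [hω]
  rw [hmul]
  refine condExp_mul_of_stronglyMeasurable_left hg ?_ ((integrable_const 1).indicator ht)
  rw [← hmul]
  exact hgi.indicator ht

end

end MeasureTheory

namespace ProbabilityTheory

variable {Ω : Type*} {m' m₁ m₂ mΩ : MeasurableSpace Ω} [StandardBorelSpace Ω]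
  {μ : Measure Ω} [IsFiniteMeasure μ] {hm' : m' ≤ mΩ}

theorem CondIndep.condExp_sup_ae_eq (h : CondIndep m' m₁ m₂ hm' μ) (hm₁ : m₁ ≤ mΩ)
    (hm₂ : m₂ ≤ mΩ) {s : Set Ω} (hs : MeasurableSet[m₁] s) :
    μ⟦s | m' ⊔ m₂⟧ =ᵐ[μ] μ⟦s | m'⟧ := by
  have hsup : m' ⊔ m₂ ≤ mΩ := sup_le hm' hm₂
  have hind : Integrable (s.indicator fun _ => (1 : ℝ)) μ :=
    (integrable_const 1).indicator (hm₁ s hs)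
  refine (ae_eq_condExp_of_forall_setIntegral_eq hsup hind
    (fun _ _ _ => integrable_condExp.integrableOn) (fun u hu _ => ?_)
    (stronglyMeasurable_condExp.mono (le_sup_left : m' ≤ m' ⊔ m₂)).aestronglyMeasurable).symm
  refine setIntegral_eq_of_isPiSystem hsup (sup_eq_generateFrom_image2_inter m' m₂)
    (isPiSystem_image2_inter m' m₂) integrable_condExp hind (integral_condExp hm') ?_ hu
  rintro _ ⟨a, ha, b, hb, rfl⟩
  have hbΩ : MeasurableSet b := hm₂ b hb
  have hprod := (condIndep_iff m' m₁ m₂ hm' hm₁ hm₂ μ).1 h s b hs hb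
  calc ∫ x in a ∩ b, (μ⟦s | m'⟧) x ∂μ = ∫ x in a, b.indicator (μ⟦s | m'⟧) x ∂μ :=
        (setIntegral_indicator hbΩ).symm
    _ = ∫ x in a, μ[b.indicator (μ⟦s | m'⟧) | m'] x ∂μ :=
        (setIntegral_condExp hm' (integrable_condExp.indicator hbΩ) ha).symm
    _ = ∫ x in a, (μ⟦s ∩ b | m'⟧) x ∂μ := setIntegral_congr_ae (hm' a ha) <|
        ((condExp_indicator_ae_eq_mul_condExp stronglyMeasurable_condExp integrable_condExp
          hbΩ).trans hprod.symm).mono fun _ hx _ => hx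
    _ = ∫ x in a, (s ∩ b).indicator (fun _ => (1 : ℝ)) x ∂μ :=
        setIntegral_condExp hm' ((integrable_const 1).indicator ((hm₁ s hs).inter hbΩ)) ha
    _ = ∫ x in a ∩ b, s.indicator (fun _ => (1 : ℝ)) x ∂μ := by
        rw [Set.inter_comm, ← Set.indicator_indicator, setIntegral_indicator hbΩ]

theorem condIndep_of_condExp_sup_ae_eq (hm₁ : m₁ ≤ mΩ) (hm₂ : m₂ ≤ mΩ)
    (h : ∀ s, MeasurableSet[m₁] s → μ⟦s | m' ⊔ m₂⟧ =ᵐ[μ] μ⟦s | m'⟧) :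
    CondIndep m' m₁ m₂ hm' μ := by
  refine (condIndep_iff m' m₁ m₂ hm' hm₁ hm₂ μ).2 fun s t hs ht => ?_
  have htΩ : MeasurableSet t := hm₂ t ht
  have hind : Integrable (s.indicator fun _ => (1 : ℝ)) μ :=
    (integrable_const 1).indicator (hm₁ s hs)
  calc μ⟦s ∩ t | m'⟧ = μ[t.indicator (s.indicator fun _ => (1 : ℝ)) | m'] := by
        rw [Set.indicator_indicator, Set.inter_comm]
    _ =ᵐ[μ] μ[μ[t.indicator (s.indicator fun _ => (1 : ℝ)) | m' ⊔ m₂] | m'] :=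
        (condExp_condExp_of_le le_sup_left (sup_le hm' hm₂)).symm
    _ =ᵐ[μ] μ[t.indicator (μ⟦s | m' ⊔ m₂⟧) | m'] :=
        condExp_congr_ae (condExp_indicator hind (le_sup_right (a := m') t ht))
    _ =ᵐ[μ] μ[t.indicator (μ⟦s | m'⟧) | m'] :=
        condExp_congr_ae ((h s hs).mono fun ω hω => by simp only [Set.indicator, hω])
    _ =ᵐ[μ] μ⟦s | m'⟧ * μ⟦t | m'⟧ :=
        condExp_indicator_ae_eq_mul_condExp stronglyMeasurable_condExp integrable_condExp htΩ

/-- Both `μ⟦s | n ⊔ m₃⟧` and `μ⟦s | n⟧` condition on a σ-algebra between `m'` and `m' ⊔ m₂`,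
on which `h` makes the conditional probabilities of `m₁`-events agree. -/
theorem CondIndep.weakUnion {n m₃ : MeasurableSpace Ω} (h : CondIndep m' m₁ m₂ hm' μ)
    (hm₁ : m₁ ≤ mΩ) (hm₂ : m₂ ≤ mΩ) (hm'n : m' ≤ n) (hn : n ≤ m' ⊔ m₂) (hm₃ : m₃ ≤ m' ⊔ m₂)
    (hnΩ : n ≤ mΩ) : CondIndep n m₁ m₃ hnΩ μ := by
  have hsup : m' ⊔ m₂ ≤ mΩ := sup_le hm' hm₂
  refine condIndep_of_condExp_sup_ae_eq hm₁ (hm₃.trans hsup) fun s hs => ?_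
  have hs' := h.condExp_sup_ae_eq hm₁ hm₂ hs
  exact (condExp_ae_eq_of_le_of_condExp_ae_eq (hm'n.trans le_sup_left) (sup_le hn hm₃) hsup
    hs').trans (condExp_ae_eq_of_le_of_condExp_ae_eq hm'n hn hsup hs').symm

end ProbabilityTheory

section Coordinates

variable {Ω : Type*} {mΩ : MeasurableSpace Ω} {p : ℕ} (X : Fin p → Ω → ℝ)

abbrev sigmaCoords (S : Finset (Fin p)) : MeasurableSpace Ω :=
  ⨆ i ∈ S, MeasurableSpace.comap (X i) inferInstance

theorem comap_subvector_eq_sigmaCoords (S : Finset (Fin p)) :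
    MeasurableSpace.comap (fun ω (j : S) => X j ω) MeasurableSpace.pi = sigmaCoords X S := by
  simp only [MeasurableSpace.pi, MeasurableSpace.comap_iSup, MeasurableSpace.comap_comp]
  exact (iSup_subtype' (f := fun i (_ : i ∈ S) => MeasurableSpace.comap (X i) inferInstance)).symm

variable {X}

theorem sigmaCoords_mono {S T : Finset (Fin p)} (h : S ⊆ T) : sigmaCoords X S ≤ sigmaCoords X T :=
  biSup_mono fun _ hi => h hi

theorem sigmaCoords_le (hX : ∀ i, Measurable (X i)) (S : Finset (Fin p)) :
    sigmaCoords X S ≤ mΩ :=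
  iSup₂_le fun i _ => (hX i).comap_le

theorem sigmaCoords_union (S T : Finset (Fin p)) :
    sigmaCoords X (S ∪ T) = sigmaCoords X S ⊔ sigmaCoords X T := by
  simp only [sigmaCoords, Finset.mem_union, iSup_or, iSup_sup_eq]

end Coordinates

section CI

variable {Ω : Type*} {mΩ : MeasurableSpace Ω} [StandardBorelSpace Ω] {μ : Measure Ω}
  [IsFiniteMeasure μ] {p : ℕ} {E : Ω → ℝ} {X : Fin p → Ω → ℝ} {hX : ∀ i, Measurable (X i)}

theorem ci_iff_condIndep {A B : Finset (Fin p)} :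
    CI μ E X hX A B ↔ CondIndep (sigmaCoords X B) (MeasurableSpace.comap E inferInstance)
      (sigmaCoords X A) (sigmaCoords_le hX B) μ := by
  rw [CI, condIndepFun_iff_condIndep]
  simp only [comap_subvector_eq_sigmaCoords]

theorem CI.singleton_compl_of_mem (hE : Measurable E) {A : Finset (Fin p)}
    (h : CI μ E X hX A Aᶜ) {j : Fin p} (hj : j ∈ A) : CI μ E X hX {j} {j}ᶜ := by
  rw [ci_iff_condIndep] at h ⊢
  have hAAc : sigmaCoords X Aᶜ ⊔ sigmaCoords X A = sigmaCoords X Finset.univ := by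
    rw [← sigmaCoords_union, Finset.union_comm, Finset.union_compl]
  refine h.weakUnion hE.comap_le (sigmaCoords_le hX A) (sigmaCoords_mono ?_) ?_ ?_ _
  · simpa using hj
  · exact hAAc ▸ sigmaCoords_mono (Finset.subset_univ _)
  · exact hAAc ▸ sigmaCoords_mono (Finset.subset_univ _)

end CI

section IntersectionProperty

variable {α : Type*} [Fintype α] [DecidableEq α]

def HasIntersectionProperty (P : Finset α → Finset α → Prop) : Prop :=
  ∀ A B C : Finset α, Disjoint A B → Disjoint A C → Disjoint B C → A ∪ B ∪ C = Finset.univ →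
    P A (B ∪ C) → P B (A ∪ C) → P (A ∪ B) C

variable {P : Finset α → Finset α → Prop}

theorem HasIntersectionProperty.insert_compl (hP : HasIntersectionProperty P) {A : Finset α}
    {a : α} (ha : a ∉ A) (hA : P A Aᶜ) (hPa : P {a} {a}ᶜ) : P (insert a A) (insert a A)ᶜ := by
  have hunion : A ∪ {a} = insert a A := by rw [Finset.union_comm, Finset.insert_eq]
  have hcompl_A : {a} ∪ (insert a A)ᶜ = Aᶜ := by
    ext x; by_cases hx : x = a <;> simp [hx, ha]
  have hcompl_a : A ∪ (insert a A)ᶜ = {a}ᶜ := by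
    ext x; by_cases hx : x = a <;> simp [hx, ha, em]
  have h := hP A {a} (insert a A)ᶜ (Finset.disjoint_singleton_right.2 ha)
    (disjoint_compl_right.mono_left (Finset.subset_insert a A))
    (disjoint_compl_right.mono_left (Finset.singleton_subset_iff.2 (Finset.mem_insert_self a A)))
    (by rw [hunion, Finset.union_compl])
  rw [hcompl_A, hcompl_a, hunion] at h
  exact h hA hPa

theorem HasIntersectionProperty.union_compl (hP : HasIntersectionProperty P) {A S : Finset α}
    (hA : P A Aᶜ) (hS : ∀ a ∈ S, P {a} {a}ᶜ) : P (A ∪ S) (A ∪ S)ᶜ := by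
  induction S using Finset.induction_on with
  | empty => simpa using hA
  | insert a S _ ih =>
    rw [Finset.union_insert]
    by_cases haS : a ∈ A ∪ S
    · rw [Finset.insert_eq_of_mem haS]
      exact ih fun b hb => hS b (Finset.mem_insert_of_mem hb)
    · exact hP.insert_compl haS (ih fun b hb => hS b (Finset.mem_insert_of_mem hb))
        (hS a (Finset.mem_insert_self a S))

end IntersectionProperty

/-- Let `W` be a maximizer of `|U|` among subsets `U` with `E ⊥ X_U | X_{-U}` and
`W̃ = {j : E ⊥ X_j | X_{-j}}`. Then `W ⊆ W̃`, and if the intersection property holds,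
`W = W̃`. -/
theorem markov_boundary_characterization {Ω : Type*} {mΩ : MeasurableSpace Ω}
    [StandardBorelSpace Ω] (μ : Measure Ω) [IsProbabilityMeasure μ] {p : ℕ}
    (E : Ω → ℝ) (X : Fin p → Ω → ℝ) (hE : Measurable E) (hX : ∀ i, Measurable (X i))
    (W Wt : Finset (Fin p))
    (hWci : CI μ E X hX W Wᶜ)
    (hWmax : ∀ U : Finset (Fin p), CI μ E X hX U Uᶜ → U.card ≤ W.card)
    (hWt : ∀ j : Fin p, j ∈ Wt ↔ CI μ E X hX {j} {j}ᶜ) :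
    W ⊆ Wt ∧
      ((∀ A B C : Finset (Fin p), Disjoint A B → Disjoint A C → Disjoint B C →
          A ∪ B ∪ C = Finset.univ →
          CI μ E X hX A (B ∪ C) → CI μ E X hX B (A ∪ C) → CI μ E X hX (A ∪ B) C) →
        W = Wt) := by
  have hsub : W ⊆ Wt := fun j hj => (hWt j).2 (hWci.singleton_compl_of_mem hE hj)
  refine ⟨hsub, fun hInt => ?_⟩
  have hWt_ci : CI μ E X hX Wt Wtᶜ := by
    have h := HasIntersectionProperty.union_compl hInt hWci fun j hj => (hWt j).1 hj
    rwa [Finset.union_eq_right.2 hsub] at h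
  exact Finset.eq_of_subset_of_card_le hsub (hWmax Wt hWt_ci)
end

section
/- Let E be a real random variable and X_U a random vector such that the conditional distribution of E given X_U is continuous and symmetric around 0. Let μ be the law of E and ν the law of |E|. Then ∫_0^∞ Var(P(|E| ≥ t | X_U)) dν(t) = 4 ∫_{-∞}^∞ Var(P(E ≥ t | X_U)) dμ(t), i.e., the Azadkia–Chatterjee numerator Q satisfies Q(|E|, X_U) = 4 Q(E, X_U). -/
/-!
Write `κ` for the conditional distribution of `E` given `X`, so that `P(E ≥ t | X) = κ_X [t, ∞)`.
If every `κ_x` is symmetric, then for `t > 0` we have `P(|E| ≥ t | X) = 2 P(E ≥ t | X)`, hence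
`Var P(|E| ≥ t | X) = 4 Var P(E ≥ t | X)`. If moreover `κ_x` has no atoms, then
`P(E ≥ -t | X) = 1 - P(E ≥ t | X)`, so `g(t) = Var P(E ≥ t | X)` is even. Since `E ≠ 0` almost
surely, both integrals become `∫ 4 g(|E|) dP = ∫ 4 g(E) dP`.
-/

open MeasureTheory ProbabilityTheory Set

/-- `condVarProb μ Y X t` is the variance of the conditional probability
`P(Y ≥ t | X)` (as a random variable). -/
noncomputable def condVarProb {Ω β : Type*} [MeasurableSpace Ω] [MeasurableSpace β]
    (μ : Measure Ω) (Y : Ω → ℝ) (X : Ω → β) (t : ℝ) : ℝ :=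
  variance (μ[Set.indicator {ω | t ≤ Y ω} (fun _ => (1 : ℝ)) |
    MeasurableSpace.comap X inferInstance]) μ

-- The variance is a difference of two monotone functions of the parameter.
lemma measurable_variance_of_antitone {Ω ι : Type*} {mΩ : MeasurableSpace Ω} {μ : Measure Ω}
    [IsProbabilityMeasure μ] [LinearOrder ι] [TopologicalSpace ι] [OrderClosedTopology ι]
    [MeasurableSpace ι] [BorelSpace ι] {f : ι → Ω → ℝ}
    (hf : ∀ t, MemLp (f t) 2 μ) (hf_nonneg : ∀ t ω, 0 ≤ f t ω) (hf_anti : ∀ ω, Antitone (f · ω)) :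
    Measurable fun t => Var[f t; μ] := by
  have h_sq : Antitone fun t => ∫ ω, f t ω ^ 2 ∂μ := fun s t hst =>
    integral_mono (hf t).integrable_sq (hf s).integrable_sq fun ω =>
      pow_le_pow_left₀ (hf_nonneg t ω) (hf_anti ω hst) 2
  have h_mean : Antitone fun t => ∫ ω, f t ω ∂μ := fun s t hst =>
    integral_mono ((hf t).integrable one_le_two) ((hf s).integrable one_le_two) fun ω =>
      hf_anti ω hst
  simp_rw [fun t => variance_eq_sub (hf t)]
  exact h_sq.measurable.sub (h_mean.measurable.pow_const 2)

section SymmetricMeasure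

variable {ν : Measure ℝ} (hν : ν.map Neg.neg = ν)
include hν

lemma measure_Iic_neg_of_map_neg_eq_self (t : ℝ) : ν (Iic (-t)) = ν (Ici t) := by
  rw [← hν, Measure.map_apply measurable_neg measurableSet_Ici]
  congr 1
  ext s
  simp

lemma measureReal_abs_ge_of_map_neg_eq_self [IsFiniteMeasure ν] {t : ℝ} (ht : 0 < t) :
    ν.real {s | t ≤ |s|} = 2 * ν.real (Ici t) := by
  have h_split : {s : ℝ | t ≤ |s|} = Ici t ∪ Iic (-t) := by
    ext s
    simp [le_abs, le_neg]
  have h_disj : Disjoint (Ici t) (Iic (-t)) :=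
    Ici_disjoint_Iic.mpr (by linarith)
  rw [h_split, measureReal_union h_disj measurableSet_Iic, measureReal_def, measureReal_def,
    measure_Iic_neg_of_map_neg_eq_self hν, two_mul]

lemma measureReal_Ici_neg_of_map_neg_eq_self [IsProbabilityMeasure ν] {t : ℝ} (ht : ν {-t} = 0) :
    ν.real (Ici (-t)) = 1 - ν.real (Ici t) := by
  rw [← compl_Iio, probReal_compl_eq_one_sub measurableSet_Iio, measureReal_def,
    measure_congr (Iio_ae_eq_Iic' ht), measure_Iic_neg_of_map_neg_eq_self hν, measureReal_def]

end SymmetricMeasure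

section CondDistrib

variable {Ω β : Type*} {mΩ : MeasurableSpace Ω} [MeasurableSpace β] {μ : Measure Ω}
  {E : Ω → ℝ} {X : Ω → β}

lemma condVarProb_comp_eq_variance_condDistrib [IsFiniteMeasure μ] (hE : Measurable E)
    (hX : Measurable X) {f : ℝ → ℝ} (hf : Measurable f) (t : ℝ) :
    condVarProb μ (fun ω => f (E ω)) X t =
      Var[fun ω => (condDistrib E X μ (X ω)).real (f ⁻¹' Ici t); μ] :=
  (variance_congr (condDistrib_ae_eq_condExp hX hE (hf measurableSet_Ici))).symm

lemma condVarProb_eq_variance_condDistrib [IsFiniteMeasure μ] (hE : Measurable E)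
    (hX : Measurable X) (t : ℝ) :
    condVarProb μ E X t = Var[fun ω => (condDistrib E X μ (X ω)).real (Ici t); μ] :=
  condVarProb_comp_eq_variance_condDistrib hE hX measurable_id t

lemma measurable_measureReal_condDistrib [IsFiniteMeasure μ] (hX : Measurable X) {s : Set ℝ}
    (hs : MeasurableSet s) :
    Measurable fun ω => (condDistrib E X μ (X ω)).real s :=
  (((condDistrib E X μ).measurable_coe hs).comp hX).ennreal_toReal

lemma measurable_condVarProb [IsProbabilityMeasure μ] (hE : Measurable E) (hX : Measurable X) :
    Measurable (condVarProb μ E X) := by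
  simp_rw [funext (condVarProb_eq_variance_condDistrib (μ := μ) hE hX)]
  refine measurable_variance_of_antitone (fun t => ?_) (fun t ω => measureReal_nonneg)
    (fun ω s t hst => measureReal_mono (Ici_subset_Ici.mpr hst))
  refine MemLp.of_bound
    (measurable_measureReal_condDistrib hX measurableSet_Ici).aestronglyMeasurable 1
    (ae_of_all _ fun ω => ?_)
  rw [Real.norm_eq_abs, abs_of_nonneg measureReal_nonneg]
  exact measureReal_le_one

lemma condVarProb_fun_abs_eq_four_mul [IsFiniteMeasure μ] (hE : Measurable E) (hX : Measurable X)
    (hsymm : ∀ᵐ x ∂(μ.map X), (condDistrib E X μ x).map Neg.neg = condDistrib E X μ x)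
    {t : ℝ} (ht : 0 < t) :
    condVarProb μ (fun ω => |E ω|) X t = 4 * condVarProb μ E X t := by
  rw [condVarProb_comp_eq_variance_condDistrib hE hX measurable_abs,
    condVarProb_eq_variance_condDistrib hE hX, ← show (2 : ℝ) ^ 2 = 4 by norm_num,
    ← variance_const_mul]
  refine variance_congr ?_
  filter_upwards [ae_of_ae_map hX.aemeasurable hsymm] with ω hω
  exact measureReal_abs_ge_of_map_neg_eq_self hω ht

lemma condVarProb_neg [IsProbabilityMeasure μ] (hE : Measurable E) (hX : Measurable X)
    (hsymm : ∀ᵐ x ∂(μ.map X), (condDistrib E X μ x).map Neg.neg = condDistrib E X μ x)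
    (hcont : ∀ᵐ x ∂(μ.map X), ∀ t : ℝ, condDistrib E X μ x {t} = 0) (t : ℝ) :
    condVarProb μ E X (-t) = condVarProb μ E X t := by
  rw [condVarProb_eq_variance_condDistrib hE hX, condVarProb_eq_variance_condDistrib hE hX,
    ← variance_const_sub
      (measurable_measureReal_condDistrib hX (measurableSet_Ici (a := t))).aestronglyMeasurable 1]
  refine variance_congr ?_
  filter_upwards [ae_of_ae_map hX.aemeasurable hsymm, ae_of_ae_map hX.aemeasurable hcont]
    with ω h_symm h_cont
  exact measureReal_Ici_neg_of_map_neg_eq_self h_symm (h_cont (-t))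

lemma condVarProb_apply_abs [IsProbabilityMeasure μ] (hE : Measurable E) (hX : Measurable X)
    (hsymm : ∀ᵐ x ∂(μ.map X), (condDistrib E X μ x).map Neg.neg = condDistrib E X μ x)
    (hcont : ∀ᵐ x ∂(μ.map X), ∀ t : ℝ, condDistrib E X μ x {t} = 0) (t : ℝ) :
    condVarProb μ E X |t| = condVarProb μ E X t := by
  rcases abs_choice t with h | h <;> rw [h]
  exact condVarProb_neg hE hX hsymm hcont t

lemma ae_map_ne_of_condDistrib_singleton_eq_zero [IsFiniteMeasure μ] (hE : Measurable E)
    (hX : Measurable X) {a : ℝ} (hcont : ∀ᵐ x ∂(μ.map X), condDistrib E X μ x {a} = 0) :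
    ∀ᵐ s ∂(μ.map E), s ≠ a := by
  rw [ae_iff, ← condDistrib_comp_map hX.aemeasurable hE.aemeasurable]
  simp only [ne_eq, not_not, ofPred_eq_eq_singleton]
  rw [Measure.bind_apply (measurableSet_singleton a) (Kernel.aemeasurable _)]
  exact lintegral_eq_zero_of_ae_eq_zero hcont

end CondDistrib

theorem Q_abs_eq_four_Q_general {Ω β : Type*} {mΩ : MeasurableSpace Ω}
    [MeasurableSpace β] {μ : Measure Ω} [IsProbabilityMeasure μ]
    (E : Ω → ℝ) (X : Ω → β) (hE : Measurable E) (hX : Measurable X)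
    (hsymm : ∀ᵐ x ∂(μ.map X), (condDistrib E X μ x).map Neg.neg = condDistrib E X μ x)
    (hcont : ∀ᵐ x ∂(μ.map X), ∀ t : ℝ, condDistrib E X μ x {t} = 0) :
    ∫ t in Set.Ioi (0 : ℝ), condVarProb μ (fun ω => |E ω|) X t
        ∂(μ.map (fun ω => |E ω|)) =
      4 * ∫ t, condVarProb μ E X t ∂(μ.map E) := by
  have h_meas := (measurable_condVarProb (μ := μ) hE hX).const_mul 4
  have h_pos : ∀ᵐ t ∂(μ.map fun ω => |E ω|), t ∈ Ioi 0 := by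
    have h_ne := ae_map_ne_of_condDistrib_singleton_eq_zero hE hX (a := 0)
      (by filter_upwards [hcont] with x hx using hx 0)
    refine (ae_map_iff hE.abs.aemeasurable measurableSet_Ioi).2 ?_
    filter_upwards [ae_of_ae_map hE.aemeasurable h_ne] with ω hω using abs_pos.2 hω
  calc ∫ t in Ioi 0, condVarProb μ (fun ω => |E ω|) X t ∂(μ.map fun ω => |E ω|)
      = ∫ t in Ioi 0, 4 * condVarProb μ E X t ∂(μ.map fun ω => |E ω|) :=
        setIntegral_congr_fun measurableSet_Ioi fun t ht =>
          condVarProb_fun_abs_eq_four_mul hE hX hsymm ht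
    _ = ∫ ω, 4 * condVarProb μ E X |E ω| ∂μ := by
        rw [Measure.restrict_eq_self_of_ae_mem h_pos,
          integral_map hE.abs.aemeasurable h_meas.aestronglyMeasurable]
    _ = ∫ ω, 4 * condVarProb μ E X (E ω) ∂μ := by
        simp only [condVarProb_apply_abs hE hX hsymm hcont]
    _ = 4 * ∫ t, condVarProb μ E X t ∂(μ.map E) := by
        rw [← integral_const_mul, integral_map hE.aemeasurable h_meas.aestronglyMeasurable]

/-- If the conditional distribution of `E` given `X_U` is continuous and symmetric around `0`,
then the Azadkia–Chatterjee numerator satisfies `Q(|E|, X_U) = 4 Q(E, X_U)`: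
`∫_0^∞ Var(P(|E| ≥ t | X_U)) dν(t) = 4 ∫ Var(P(E ≥ t | X_U)) dμ(t)`, where `μ, ν` are the
laws of `E` and `|E|`. -/
theorem Q_abs_eq_four_Q {Ω β : Type*} {mΩ : MeasurableSpace Ω} [StandardBorelSpace Ω]
    [MeasurableSpace β] {μ : Measure Ω} [IsProbabilityMeasure μ]
    (E : Ω → ℝ) (X : Ω → β) (hE : Measurable E) (hX : Measurable X)
    (hsymm : ∀ᵐ x ∂(μ.map X), (condDistrib E X μ x).map Neg.neg = condDistrib E X μ x)
    (hcont : ∀ᵐ x ∂(μ.map X), ∀ t : ℝ, condDistrib E X μ x {t} = 0) :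
    ∫ t in Set.Ioi (0 : ℝ), condVarProb μ (fun ω => |E ω|) X t
        ∂(μ.map (fun ω => |E ω|)) =
      4 * ∫ t, condVarProb μ E X t ∂(μ.map E) :=
  Q_abs_eq_four_Q_general (mΩ := mΩ) E X hE hX hsymm hcont
end
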